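/- Let 𝔸 : ℝ² → ℝ² be continuously differentiable, Λ-periodic and odd (𝔸(−x) = −𝔸(x)). Let ξ ∈ ℝ² and let φ₁ : ℝ² → ℂ be continuously differentiable and ξ-quasiperiodic, and set φ₂(x) := conj(φ₁(−x)). Then ∫_𝕃 conj(φ₂)·(𝕎φ₁) dx = 0, ∫_𝕃 conj(φ₁)·(𝕎φ₂) dx = 0, and ∫_𝕃 conj(φ₁)·(𝕎φ₁) dx = −∫_𝕃 conj(φ₂)·(𝕎φ₂) dx. -/

import Mathlib

open MeasureTheory

/-- The Euclidean inner product on `ℝ²`. -/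
def dot2 (x y : ℝ × ℝ) : ℝ := x.1 * y.1 + x.2 * y.2

/-- `f` is `ξ`-quasiperiodic with respect to the lattice `ℤv₁ + ℤv₂`. -/
def Quasiperiodic (v₁ v₂ ξ : ℝ × ℝ) (f : ℝ × ℝ → ℂ) : Prop :=
  ∀ (x : ℝ × ℝ) (m n : ℤ),
    f (x + ((m : ℝ) • v₁ + (n : ℝ) • v₂)) =
      Complex.exp (Complex.I * (dot2 ξ ((m : ℝ) • v₁ + (n : ℝ) • v₂) : ℂ)) * f x

/-- The fundamental cell `𝕃 = {s₁v₁ + s₂v₂ : s₁, s₂ ∈ [0,1)}`. -/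
def cell (v₁ v₂ : ℝ × ℝ) : Set (ℝ × ℝ) :=
  {x | ∃ s₁ s₂ : ℝ, s₁ ∈ Set.Ico (0 : ℝ) 1 ∧ s₂ ∈ Set.Ico (0 : ℝ) 1 ∧
    x = s₁ • v₁ + s₂ • v₂}

/-- Divergence of a vector field `𝔸 : ℝ² → ℝ²`. -/
noncomputable def divA (𝔸 : ℝ × ℝ → ℝ × ℝ) (x : ℝ × ℝ) : ℝ :=
  fderiv ℝ (fun y => (𝔸 y).1) x ((1 : ℝ), (0 : ℝ)) +
    fderiv ℝ (fun y => (𝔸 y).2) x ((0 : ℝ), (1 : ℝ))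

/-- The magnetic operator `𝕎 = 𝔸·D_x + D_x·𝔸 = (2/i) 𝔸·∇ + (1/i)(div 𝔸)`. -/
noncomputable def Wop (𝔸 : ℝ × ℝ → ℝ × ℝ) (φ : ℝ × ℝ → ℂ) (x : ℝ × ℝ) : ℂ :=
  (2 / Complex.I) * fderiv ℝ φ x (𝔸 x) + (1 / Complex.I) * (divA 𝔸 x : ℂ) * φ x

/-!
The pairing `⟨φ, χ⟩ = ∫_𝕃 conj φ · 𝕎χ` is Hermitian on `ξ`-quasiperiodic functions:
`conj φ · 𝕎χ - conj (conj χ · 𝕎φ) = (2/i) div (conj φ · χ · 𝔸)`, and the divergence of a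
`Λ`-periodic field integrates to zero over `𝕃` (pull back along `s ↦ s₁v₁ + s₂v₂` and apply the
divergence theorem on the unit square, whose opposite edges cancel). Because `𝔸` is odd, the
antiunitary reflection `Rφ(x) = conj φ(-x)` satisfies `𝕎(Rφ) = -R(𝕎φ)`; as `∫_𝕃` of a periodic
function is invariant under `x ↦ -x`, this gives `⟨Rφ, Rχ⟩ = -conj ⟨φ, χ⟩`. With `φ₂ = Rφ₁` and
`R² = 1`, the two relations give `⟨φ₂, φ₁⟩ = -⟨φ₂, φ₁⟩` and `⟨φ₂, φ₂⟩ = -⟨φ₁, φ₁⟩`.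
-/

open Set Function ComplexConjugate

section Calculus

variable {E F : Type*} [NormedAddCommGroup E] [NormedSpace ℝ E]
  [NormedAddCommGroup F] [NormedSpace ℝ F]

theorem fderiv_comp_neg (f : E → F) (x : E) :
    fderiv ℝ (fun y => f (-y)) x = -fderiv ℝ f (-x) := by
  ext v
  simpa [Function.comp_def] using
    congrArg (· v) ((ContinuousLinearEquiv.neg ℝ : E ≃L[ℝ] E).comp_right_fderiv (f := f) (x := x))

theorem fderiv_neg_of_odd {f : E → F} (hf : ∀ x, f (-x) = -f x) (x : E) :
    fderiv ℝ f (-x) = fderiv ℝ f x := by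
  have h : f = fun y => -f (-y) := funext fun y => by rw [hf, neg_neg]
  conv_rhs => rw [h]
  rw [fderiv_fun_neg, fderiv_comp_neg, neg_neg]

theorem fderiv_add_of_forall_add_eq_smul {R : Type*} [DivisionSemiring R] [Module R F]
    [SMulCommClass ℝ R F] [ContinuousConstSMul R F] {f : E → F} {w : E} {c : R}
    (hf : ∀ x, f (x + w) = c • f x) (x : E) :
    fderiv ℝ f (x + w) = c • fderiv ℝ f x := by
  rw [← fderiv_comp_add_right, funext hf]
  exact congrFun (fderiv_const_smul_field c) x

theorem Function.Periodic.fderiv {f : E → F} {w : E} (hf : Periodic f w) :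
    Periodic (fderiv ℝ f) w := fun x => by
  rw [← fderiv_comp_add_right, funext hf]

theorem fderiv_conj_apply (φ : E → ℂ) (x v : E) :
    fderiv ℝ (fun y => conj (φ y)) x v = conj (fderiv ℝ φ x v) :=
  congrArg (· v) (Complex.conjCLE.comp_fderiv (f := φ) (x := x))

theorem ContDiff.conj {n : WithTop ℕ∞} {φ : E → ℂ} (hφ : ContDiff ℝ n φ) :
    ContDiff ℝ n fun x => conj (φ x) :=
  Complex.conjCLE.contDiff.comp hφ

end Calculus

section Divergence

variable {𝔸 : ℝ × ℝ → ℝ × ℝ}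

theorem divA_eq_fderiv_apply {x : ℝ × ℝ} (h𝔸 : DifferentiableAt ℝ 𝔸 x) :
    divA 𝔸 x = (fderiv ℝ 𝔸 x (1, 0)).1 + (fderiv ℝ 𝔸 x (0, 1)).2 := by
  rw [divA, fderiv.fst h𝔸, fderiv.snd h𝔸]
  rfl

theorem divA_eq_trace {x : ℝ × ℝ} (h𝔸 : DifferentiableAt ℝ 𝔸 x) :
    divA 𝔸 x = LinearMap.trace ℝ (ℝ × ℝ) (fderiv ℝ 𝔸 x) := by
  rw [LinearMap.trace_eq_matrix_trace ℝ (Module.Basis.finTwoProd ℝ), Matrix.trace_fin_two,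
    divA_eq_fderiv_apply h𝔸]
  simp [LinearMap.toMatrix_apply]

theorem divA_symm_comp_comp (e : (ℝ × ℝ) ≃L[ℝ] (ℝ × ℝ)) {s : ℝ × ℝ}
    (h𝔸 : DifferentiableAt ℝ 𝔸 (e s)) :
    divA (e.symm ∘ 𝔸 ∘ e) s = divA 𝔸 (e s) := by
  have hd : HasFDerivAt (e.symm ∘ 𝔸 ∘ e)
      ((e.symm : (ℝ × ℝ) →L[ℝ] (ℝ × ℝ)).comp ((fderiv ℝ 𝔸 (e s)).comp e)) s :=
    e.symm.hasFDerivAt.comp s (h𝔸.hasFDerivAt.comp s e.hasFDerivAt)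
  rw [divA_eq_trace hd.differentiableAt, divA_eq_trace h𝔸, hd.fderiv,
    ← LinearMap.trace_conj' (fderiv ℝ 𝔸 (e s) : (ℝ × ℝ) →ₗ[ℝ] (ℝ × ℝ)) e.symm.toLinearEquiv]
  rfl

theorem divA_neg_of_odd (h𝔸 : ∀ x, 𝔸 (-x) = -𝔸 x) (x : ℝ × ℝ) : divA 𝔸 (-x) = divA 𝔸 x := by
  simp only [divA, fderiv_neg_of_odd (f := fun y => (𝔸 y).1) (fun y => by simp [h𝔸]),
    fderiv_neg_of_odd (f := fun y => (𝔸 y).2) (fun y => by simp [h𝔸])]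

theorem Function.Periodic.divA {w : ℝ × ℝ} (h𝔸 : Periodic 𝔸 w) : Periodic (divA 𝔸) w :=
  fun x => by
    simp only [_root_.divA,
      (show Periodic (fun y => (𝔸 y).1) w from fun y => by simp [h𝔸 y]).fderiv x,
      (show Periodic (fun y => (𝔸 y).2) w from fun y => by simp [h𝔸 y]).fderiv x]

theorem continuous_divA (h𝔸 : ContDiff ℝ 1 𝔸) : Continuous (divA 𝔸) :=
  (((contDiff_fst.comp h𝔸).continuous_fderiv one_ne_zero).clm_apply continuous_const).add
    (((contDiff_snd.comp h𝔸).continuous_fderiv one_ne_zero).clm_apply continuous_const)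

theorem fderiv_fst_mul_add_fderiv_snd_mul {ψ : ℝ × ℝ → ℂ} {s : ℝ × ℝ}
    (h𝔸 : DifferentiableAt ℝ 𝔸 s) (hψ : DifferentiableAt ℝ ψ s) :
    fderiv ℝ (fun t => ((𝔸 t).1 : ℂ) * ψ t) s (1, 0) +
        fderiv ℝ (fun t => ((𝔸 t).2 : ℂ) * ψ t) s (0, 1) =
      fderiv ℝ ψ s (𝔸 s) + divA 𝔸 s * ψ s := by
  have hψ𝔸 : fderiv ℝ ψ s (𝔸 s) =
      (𝔸 s).1 • fderiv ℝ ψ s (1, 0) + (𝔸 s).2 • fderiv ℝ ψ s (0, 1) := by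
    conv_lhs => rw [show 𝔸 s = (𝔸 s).1 • ((1 : ℝ), (0 : ℝ)) + (𝔸 s).2 • ((0 : ℝ), (1 : ℝ)) by
      ext <;> simp]
    rw [map_add, map_smul, map_smul]
  have h₁ : HasFDerivAt (fun t => ((𝔸 t).1 : ℂ))
      (Complex.ofRealCLM.comp ((ContinuousLinearMap.fst ℝ ℝ ℝ).comp (fderiv ℝ 𝔸 s))) s :=
    Complex.ofRealCLM.hasFDerivAt.comp s h𝔸.hasFDerivAt.fst
  have h₂ : HasFDerivAt (fun t => ((𝔸 t).2 : ℂ))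
      (Complex.ofRealCLM.comp ((ContinuousLinearMap.snd ℝ ℝ ℝ).comp (fderiv ℝ 𝔸 s))) s :=
    Complex.ofRealCLM.hasFDerivAt.comp s h𝔸.hasFDerivAt.snd
  rw [(h₁.fun_mul hψ.hasFDerivAt).fderiv, (h₂.fun_mul hψ.hasFDerivAt).fderiv, hψ𝔸,
    divA_eq_fderiv_apply h𝔸]
  simp [Complex.real_smul]
  ring

theorem integral_Icc_fderiv_add_divA_mul_eq_zero {ψ : ℝ × ℝ → ℂ} (h𝔸 : ContDiff ℝ 1 𝔸)
    (hψ : ContDiff ℝ 1 ψ) (h𝔸₁ : Periodic 𝔸 (1, 0)) (h𝔸₂ : Periodic 𝔸 (0, 1))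
    (hψ₁ : Periodic ψ (1, 0)) (hψ₂ : Periodic ψ (0, 1)) :
    ∫ s in Icc (0 : ℝ × ℝ) 1, fderiv ℝ ψ s (𝔸 s) + divA 𝔸 s * ψ s = 0 := by
  set f : ℝ × ℝ → ℂ := fun s => ((𝔸 s).1 : ℂ) * ψ s
  set g : ℝ × ℝ → ℂ := fun s => ((𝔸 s).2 : ℂ) * ψ s
  have hf : ContDiff ℝ 1 f := (Complex.ofRealCLM.contDiff.comp (contDiff_fst.comp h𝔸)).mul hψ
  have hg : ContDiff ℝ 1 g := (Complex.ofRealCLM.contDiff.comp (contDiff_snd.comp h𝔸)).mul hψ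
  have hdiv : ∀ s, fderiv ℝ f s (1, 0) + fderiv ℝ g s (0, 1) =
      fderiv ℝ ψ s (𝔸 s) + divA 𝔸 s * ψ s := fun s =>
    fderiv_fst_mul_add_fderiv_snd_mul (h𝔸.differentiable one_ne_zero s)
      (hψ.differentiable one_ne_zero s)
  have hint : IntegrableOn (fun s => fderiv ℝ f s (1, 0) + fderiv ℝ g s (0, 1)) (Icc 0 1) := by
    simp only [hdiv]
    exact (((hψ.continuous_fderiv one_ne_zero).clm_apply h𝔸.continuous).add
      ((Complex.continuous_ofReal.comp (continuous_divA h𝔸)).mul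
        hψ.continuous)).continuousOn.integrableOn_Icc
  have hgauss := integral_divergence_prod_Icc_of_hasFDerivAt_off_countable_of_le f g
    (fderiv ℝ f) (fderiv ℝ g) 0 1 zero_le_one ∅ countable_empty hf.continuous.continuousOn
    hg.continuous.continuousOn
    (fun s _ => (hf.differentiable one_ne_zero s).hasFDerivAt)
    (fun s _ => (hg.differentiable one_ne_zero s).hasFDerivAt) hint
  have hf₁ : ∀ y : ℝ, f (1, y) = f (0, y) := fun y => by
    simpa using (show f ((0, y) + (1, 0)) = f (0, y) by simp only [f, h𝔸₁ _, hψ₁ _])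
  have hg₁ : ∀ x : ℝ, g (x, 1) = g (x, 0) := fun x => by
    simpa using (show g ((x, 0) + (0, 1)) = g (x, 0) by simp only [g, h𝔸₂ _, hψ₂ _])
  simpa only [hdiv, Prod.fst_zero, Prod.snd_zero, Prod.fst_one, Prod.snd_one, hf₁, hg₁,
    sub_self, zero_add] using hgauss

end Divergence

def LatticePeriodic {α : Type*} (v₁ v₂ : ℝ × ℝ) (f : ℝ × ℝ → α) : Prop :=
  ∀ (x : ℝ × ℝ) (m n : ℤ), f (x + ((m : ℝ) • v₁ + (n : ℝ) • v₂)) = f x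

def conjReflect (φ : ℝ × ℝ → ℂ) (x : ℝ × ℝ) : ℂ := conj (φ (-x))

theorem ContDiff.conjReflect {n : WithTop ℕ∞} {φ : ℝ × ℝ → ℂ} (hφ : ContDiff ℝ n φ) :
    ContDiff ℝ n (conjReflect φ) :=
  (hφ.comp contDiff_neg).conj

theorem conjReflect_conjReflect (φ : ℝ × ℝ → ℂ) : conjReflect (conjReflect φ) = φ := by
  ext x
  simp [conjReflect]

section Lattice

variable {v₁ v₂ ξ : ℝ × ℝ}

namespace LatticePeriodic

variable {α : Type*} {f : ℝ × ℝ → α}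

theorem periodic (hf : LatticePeriodic v₁ v₂ f) (m n : ℤ) :
    Periodic f ((m : ℝ) • v₁ + (n : ℝ) • v₂) :=
  (hf · m n)

theorem periodic_left (hf : LatticePeriodic v₁ v₂ f) : Periodic f v₁ := by
  simpa using hf.periodic 1 0

theorem periodic_right (hf : LatticePeriodic v₁ v₂ f) : Periodic f v₂ := by
  simpa using hf.periodic 0 1

end LatticePeriodic

namespace Quasiperiodic

variable {φ χ : ℝ × ℝ → ℂ}

theorem conj_mul (hφ : Quasiperiodic v₁ v₂ ξ φ) (hχ : Quasiperiodic v₁ v₂ ξ χ) :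
    LatticePeriodic v₁ v₂ fun x => conj (φ x) * χ x := fun x m n => by
  dsimp only
  rw [hφ, hχ, map_mul, ← Complex.exp_conj, map_mul, Complex.conj_I, Complex.conj_ofReal,
    mul_mul_mul_comm, ← Complex.exp_add, neg_mul, neg_add_cancel, Complex.exp_zero, one_mul]

theorem conjReflect (hφ : Quasiperiodic v₁ v₂ ξ φ) : Quasiperiodic v₁ v₂ ξ (conjReflect φ) := by
  intro x m n
  have hw : -(x + ((m : ℝ) • v₁ + (n : ℝ) • v₂)) =
      -x + (((-m : ℤ) : ℝ) • v₁ + ((-n : ℤ) : ℝ) • v₂) := by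
    push_cast
    module
  have hdot : dot2 ξ (((-m : ℤ) : ℝ) • v₁ + ((-n : ℤ) : ℝ) • v₂) =
      -dot2 ξ ((m : ℝ) • v₁ + (n : ℝ) • v₂) := by
    simp only [dot2, Prod.fst_add, Prod.snd_add, Prod.smul_fst, Prod.smul_snd, smul_eq_mul]
    push_cast
    ring
  simp only [_root_.conjReflect]
  rw [hw, hφ, hdot, map_mul, ← Complex.exp_conj, map_mul, Complex.conj_I, Complex.conj_ofReal]
  push_cast
  ring_nf

theorem Wop {𝔸 : ℝ × ℝ → ℝ × ℝ} (h𝔸 : LatticePeriodic v₁ v₂ 𝔸)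
    (hφ : Quasiperiodic v₁ v₂ ξ φ) : Quasiperiodic v₁ v₂ ξ (Wop 𝔸 φ) := fun x m n => by
  have hDφ := fderiv_add_of_forall_add_eq_smul
    (fun y => (hφ y m n).trans (smul_eq_mul ..).symm) x
  simp only [_root_.Wop, h𝔸 x m n, (h𝔸.periodic m n).divA x, hDφ, hφ x m n, smul_apply,
    smul_eq_mul]
  ring

end Quasiperiodic

end Lattice

section Operator

variable {𝔸 : ℝ × ℝ → ℝ × ℝ} {φ χ : ℝ × ℝ → ℂ}

theorem continuous_Wop (h𝔸 : ContDiff ℝ 1 𝔸) (hφ : ContDiff ℝ 1 φ) : Continuous (Wop 𝔸 φ) :=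
  (continuous_const.mul ((hφ.continuous_fderiv one_ne_zero).clm_apply h𝔸.continuous)).add
    ((continuous_const.mul (Complex.continuous_ofReal.comp (continuous_divA h𝔸))).mul
      hφ.continuous)

theorem Wop_conjReflect (h𝔸 : ∀ x, 𝔸 (-x) = -𝔸 x) (x : ℝ × ℝ) :
    Wop 𝔸 (conjReflect φ) x = -conj (Wop 𝔸 φ (-x)) := by
  have hD : fderiv ℝ (conjReflect φ) x (𝔸 x) = conj (fderiv ℝ φ (-x) (𝔸 (-x))) := by
    rw [show conjReflect φ = fun y => conj ((fun z => φ (-z)) y) from rfl, fderiv_conj_apply,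
      fderiv_comp_neg, h𝔸, neg_apply]
    simp only [map_neg]
  simp only [Wop, hD, divA_neg_of_odd h𝔸, conjReflect, map_add, map_mul, map_div₀,
    Complex.conj_I, Complex.conj_ofReal, map_ofNat, map_one]
  ring

theorem conj_mul_Wop_sub_conj {x : ℝ × ℝ} (hφ : DifferentiableAt ℝ φ x)
    (hχ : DifferentiableAt ℝ χ x) :
    conj (φ x) * Wop 𝔸 χ x - conj (conj (χ x) * Wop 𝔸 φ x) =
      (2 / Complex.I) * (fderiv ℝ (fun y => conj (φ y) * χ y) x (𝔸 x) +
        divA 𝔸 x * (conj (φ x) * χ x)) := by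
  have hφc : DifferentiableAt ℝ (fun y => conj (φ y)) x :=
    Complex.conjCLE.differentiableAt.comp x hφ
  rw [fderiv_fun_mul hφc hχ]
  simp only [Wop, add_apply, smul_apply, smul_eq_mul, fderiv_conj_apply, map_add, map_mul,
    map_div₀, Complex.conj_I, Complex.conj_ofReal, map_ofNat, map_one, Complex.conj_conj]
  ring

end Operator

section Cell

variable {v₁ v₂ : ℝ × ℝ}

def cellMap (v₁ v₂ : ℝ × ℝ) : (ℝ × ℝ) →L[ℝ] (ℝ × ℝ) :=
  (ContinuousLinearMap.fst ℝ ℝ ℝ).smulRight v₁ + (ContinuousLinearMap.snd ℝ ℝ ℝ).smulRight v₂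

theorem cellMap_apply (s : ℝ × ℝ) : cellMap v₁ v₂ s = s.1 • v₁ + s.2 • v₂ := rfl

theorem cellMap_add_fst (s : ℝ × ℝ) : cellMap v₁ v₂ (s + (1, 0)) = cellMap v₁ v₂ s + v₁ := by
  simp [cellMap_apply, add_smul]
  abel

theorem cellMap_add_snd (s : ℝ × ℝ) : cellMap v₁ v₂ (s + (0, 1)) = cellMap v₁ v₂ s + v₂ := by
  simp [cellMap_apply, add_smul]
  abel

theorem cellMap_injective (h : LinearIndependent ℝ ![v₁, v₂]) : Injective (cellMap v₁ v₂) :=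
  (injective_iff_map_eq_zero _).2 fun s hs => by
    obtain ⟨h₁, h₂⟩ := LinearIndependent.pair_iff.1 h s.1 s.2 hs
    exact Prod.ext h₁ h₂

theorem cell_eq_image : cell v₁ v₂ = cellMap v₁ v₂ '' (Ico 0 1 ×ˢ Ico 0 1) := by
  ext x
  constructor
  · rintro ⟨s₁, s₂, h₁, h₂, rfl⟩
    exact ⟨(s₁, s₂), ⟨h₁, h₂⟩, rfl⟩
  · rintro ⟨s, ⟨h₁, h₂⟩, rfl⟩
    exact ⟨s.1, s.2, h₁, h₂, rfl⟩

theorem integrableOn_cell {g : ℝ × ℝ → ℂ} (hg : Continuous g) : IntegrableOn g (cell v₁ v₂) := by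
  refine (hg.continuousOn.integrableOn_compact
    ((isCompact_Icc (a := (0 : ℝ × ℝ)) (b := 1)).image (cellMap v₁ v₂).continuous)).mono_set ?_
  rw [cell_eq_image, Icc_prod_eq]
  exact image_mono (prod_mono Ico_subset_Icc_self Ico_subset_Icc_self)

variable {E : Type*} [NormedAddCommGroup E] [NormedSpace ℝ E]
  (h : LinearIndependent ℝ ![v₁, v₂])
include h

theorem integral_cell_eq_abs_det_smul (g : ℝ × ℝ → E) :
    ∫ x in cell v₁ v₂, g x = |(cellMap v₁ v₂).det| • ∫ s in Icc 0 1, g (cellMap v₁ v₂ s) := by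
  have hae : (Ico (0 : ℝ) 1 ×ˢ Ico (0 : ℝ) 1 : Set (ℝ × ℝ)) =ᵐ[volume] Icc 0 1 ×ˢ Icc 0 1 :=
    Measure.set_prod_ae_eq Ico_ae_eq_Icc Ico_ae_eq_Icc
  rw [cell_eq_image, integral_image_eq_integral_abs_det_fderiv_smul volume
    (measurableSet_Ico.prod measurableSet_Ico)
    (fun s _ => (cellMap v₁ v₂).hasFDerivAt.hasFDerivWithinAt) (cellMap_injective h).injOn,
    integral_smul, setIntegral_congr_set hae, Icc_prod_eq]
  rfl

theorem integral_cell_comp_neg {g : ℝ × ℝ → E} (hg₁ : Periodic g v₁) (hg₂ : Periodic g v₂) :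
    ∫ x in cell v₁ v₂, g (-x) = ∫ x in cell v₁ v₂, g x := by
  rw [integral_cell_eq_abs_det_smul h, integral_cell_eq_abs_det_smul h]
  congr 1
  have hflip : ∀ s, g (-cellMap v₁ v₂ s) = g (cellMap v₁ v₂ (1 - s)) := fun s => by
    rw [← hg₁, ← hg₂]
    congr 1
    simp only [cellMap_apply, Prod.fst_sub, Prod.snd_sub, Prod.fst_one, Prod.snd_one, sub_smul,
      one_smul]
    abel
  have hsub := (Measure.measurePreserving_sub_left volume (1 : ℝ × ℝ)).setIntegral_preimage_emb
    (MeasurableEquiv.subLeft (1 : ℝ × ℝ)).measurableEmbedding (fun s => g (cellMap v₁ v₂ s))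
    (Icc 0 1)
  rw [preimage_const_sub_Icc, sub_zero, sub_self] at hsub
  simp only [hflip]
  exact hsub

theorem integral_cell_fderiv_add_divA_mul_eq_zero {𝔸 : ℝ × ℝ → ℝ × ℝ} {ψ : ℝ × ℝ → ℂ}
    (h𝔸 : ContDiff ℝ 1 𝔸) (h𝔸₁ : Periodic 𝔸 v₁) (h𝔸₂ : Periodic 𝔸 v₂)
    (hψ : ContDiff ℝ 1 ψ) (hψ₁ : Periodic ψ v₁) (hψ₂ : Periodic ψ v₂) :
    ∫ x in cell v₁ v₂, fderiv ℝ ψ x (𝔸 x) + divA 𝔸 x * ψ x = 0 := by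
  set e : (ℝ × ℝ) ≃L[ℝ] (ℝ × ℝ) := (LinearEquiv.ofInjectiveEndo
    (cellMap v₁ v₂ : (ℝ × ℝ) →ₗ[ℝ] (ℝ × ℝ)) (cellMap_injective h)).toContinuousLinearEquiv
  have he : ∀ s, cellMap v₁ v₂ s = e s := fun _ => rfl
  have hshift₁ : ∀ s, e (s + (1, 0)) = e s + v₁ := cellMap_add_fst
  have hshift₂ : ∀ s, e (s + (0, 1)) = e s + v₂ := cellMap_add_snd
  have hpull : ∀ s, fderiv ℝ ψ (e s) (𝔸 (e s)) + divA 𝔸 (e s) * ψ (e s) =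
      fderiv ℝ (ψ ∘ e) s ((e.symm ∘ 𝔸 ∘ e) s) + divA (e.symm ∘ 𝔸 ∘ e) s * (ψ ∘ e) s := by
    intro s
    rw [divA_symm_comp_comp e (h𝔸.differentiable one_ne_zero _), e.comp_right_fderiv]
    simp
  rw [integral_cell_eq_abs_det_smul h]
  simp only [he, hpull]
  rw [integral_Icc_fderiv_add_divA_mul_eq_zero (e.symm.contDiff.comp (h𝔸.comp e.contDiff))
    (hψ.comp e.contDiff)
    (fun s => by simp only [comp_apply, hshift₁, h𝔸₁ _])
    (fun s => by simp only [comp_apply, hshift₂, h𝔸₂ _])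
    (fun s => by simp only [comp_apply, hshift₁, hψ₁ _])
    (fun s => by simp only [comp_apply, hshift₂, hψ₂ _]), smul_zero]

end Cell

noncomputable def matrixElement (v₁ v₂ : ℝ × ℝ) (𝔸 : ℝ × ℝ → ℝ × ℝ) (φ χ : ℝ × ℝ → ℂ) : ℂ :=
  ∫ x in cell v₁ v₂, conj (φ x) * Wop 𝔸 χ x

section MatrixElement

variable {v₁ v₂ ξ : ℝ × ℝ} {𝔸 : ℝ × ℝ → ℝ × ℝ} {φ χ : ℝ × ℝ → ℂ}
  (h : LinearIndependent ℝ ![v₁, v₂]) (h𝔸per : LatticePeriodic v₁ v₂ 𝔸)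
  (hφq : Quasiperiodic v₁ v₂ ξ φ) (hχq : Quasiperiodic v₁ v₂ ξ χ)
include h h𝔸per hφq hχq

theorem matrixElement_eq_conj_swap (h𝔸 : ContDiff ℝ 1 𝔸) (hφ : ContDiff ℝ 1 φ)
    (hχ : ContDiff ℝ 1 χ) :
    matrixElement v₁ v₂ 𝔸 φ χ = conj (matrixElement v₁ v₂ 𝔸 χ φ) := by
  have hρ := hφq.conj_mul hχq
  have hcont : ∀ {f g : ℝ × ℝ → ℂ}, ContDiff ℝ 1 f → ContDiff ℝ 1 g →
      Continuous fun x => conj (f x) * Wop 𝔸 g x := fun hf hg =>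
    hf.conj.continuous.mul (continuous_Wop h𝔸 hg)
  rw [matrixElement, matrixElement, ← integral_conj, ← sub_eq_zero,
    ← integral_sub (integrableOn_cell (hcont hφ hχ))
      (integrableOn_cell (Complex.continuous_conj.comp' (hcont hχ hφ)))]
  simp only [conj_mul_Wop_sub_conj (hφ.differentiable one_ne_zero _)
    (hχ.differentiable one_ne_zero _)]
  rw [integral_const_mul, integral_cell_fderiv_add_divA_mul_eq_zero h h𝔸 h𝔸per.periodic_left
    h𝔸per.periodic_right (hφ.conj.mul hχ) hρ.periodic_left hρ.periodic_right, mul_zero]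

theorem matrixElement_conjReflect (h𝔸odd : ∀ x, 𝔸 (-x) = -𝔸 x) :
    matrixElement v₁ v₂ 𝔸 (conjReflect φ) (conjReflect χ) =
      -conj (matrixElement v₁ v₂ 𝔸 φ χ) := by
  have hρ := hφq.conj_mul (hχq.Wop h𝔸per)
  rw [matrixElement, matrixElement, ← integral_cell_comp_neg h hρ.periodic_left hρ.periodic_right,
    ← integral_conj, ← integral_neg]
  congr 1
  ext x
  simp only [Wop_conjReflect h𝔸odd, conjReflect, Complex.conj_conj, map_mul]
  ring

end MatrixElement

/-- Lemma 1p of the paper: for an odd periodic magnetic potential `𝔸` and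
`φ₂(x) = conj(φ₁(−x))`, the off-diagonal matrix elements of `𝕎` vanish and the diagonal
ones are opposite. -/
theorem stmt7 (v₁ v₂ : ℝ × ℝ) (hindep : LinearIndependent ℝ ![v₁, v₂])
    (𝔸 : ℝ × ℝ → ℝ × ℝ) (h𝔸C1 : ContDiff ℝ 1 𝔸)
    (h𝔸per : ∀ (x : ℝ × ℝ) (m n : ℤ), 𝔸 (x + ((m : ℝ) • v₁ + (n : ℝ) • v₂)) = 𝔸 x)
    (h𝔸odd : ∀ x, 𝔸 (-x) = -𝔸 x)
    (ξ : ℝ × ℝ) (φ₁ : ℝ × ℝ → ℂ) (hφ₁C1 : ContDiff ℝ 1 φ₁)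
    (hφ₁qp : Quasiperiodic v₁ v₂ ξ φ₁)
    (φ₂ : ℝ × ℝ → ℂ) (hφ₂ : ∀ x, φ₂ x = (starRingEnd ℂ) (φ₁ (-x))) :
    (∫ x in cell v₁ v₂, (starRingEnd ℂ) (φ₂ x) * Wop 𝔸 φ₁ x) = 0 ∧
    (∫ x in cell v₁ v₂, (starRingEnd ℂ) (φ₁ x) * Wop 𝔸 φ₂ x) = 0 ∧
    (∫ x in cell v₁ v₂, (starRingEnd ℂ) (φ₁ x) * Wop 𝔸 φ₁ x) =
      -∫ x in cell v₁ v₂, (starRingEnd ℂ) (φ₂ x) * Wop 𝔸 φ₂ x := by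
  obtain rfl : φ₂ = conjReflect φ₁ := funext hφ₂
  have hφ₂C1 := hφ₁C1.conjReflect
  have hφ₂qp := hφ₁qp.conjReflect
  have hsymm₁₂ :=
    matrixElement_eq_conj_swap hindep h𝔸per hφ₁qp hφ₂qp h𝔸C1 hφ₁C1 hφ₂C1
  have hsymm₁₁ :=
    matrixElement_eq_conj_swap hindep h𝔸per hφ₁qp hφ₁qp h𝔸C1 hφ₁C1 hφ₁C1
  have hrefl₁₂ := matrixElement_conjReflect hindep h𝔸per hφ₁qp hφ₂qp h𝔸odd
  have hrefl₁₁ := matrixElement_conjReflect hindep h𝔸per hφ₁qp hφ₁qp h𝔸odd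
  rw [conjReflect_conjReflect, hsymm₁₂, Complex.conj_conj] at hrefl₁₂
  have h₂₁ : matrixElement v₁ v₂ 𝔸 (conjReflect φ₁) φ₁ = 0 := by
    linear_combination hrefl₁₂ / 2
  refine ⟨h₂₁, ?_, ?_⟩
  · change matrixElement v₁ v₂ 𝔸 φ₁ (conjReflect φ₁) = 0
    rw [hsymm₁₂, h₂₁, map_zero]
  · change matrixElement v₁ v₂ 𝔸 φ₁ φ₁ =
      -matrixElement v₁ v₂ 𝔸 (conjReflect φ₁) (conjReflect φ₁)
    rw [hrefl₁₁, ← hsymm₁₁, neg_neg]
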